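/- First family of entropy pairs: Let f : ℝ → ℝ be C² with f'(0) = 0. On U = {(σ,β) ∈ ℝ² : σ > |β|} define η₁(σ,β) = f(β−σ) + f(β+σ) and q₁(σ,β) = ∫_β^{β+σ} f'(s)/s ds − ∫_{β−σ}^{β} f'(s)/s ds + 2∫_0^{β} f'(s)/s ds. Then η₁ and q₁ are C² on U, with ∂_σ q₁(σ,β) = f'(β+σ)/(β+σ) − f'(β−σ)/(β−σ) and ∂_β q₁(σ,β) = f'(β+σ)/(β+σ) + f'(β−σ)/(β−σ), and (η₁,q₁) is an entropy pair, i.e. on U: ∂_σ q₁ = (β ∂_σ η₁ − σ ∂_β η₁)/(β² − σ²) and ∂_β q₁ = (β ∂_β η₁ − σ ∂_σ η₁)/(β² − σ²). -/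

import Mathlib

/-! Since `f'(0) = 0`, the integrand `f'(u)/u` extends continuously through `0` to
`g = dslope f' 0`. With `G x = ∫₀ˣ g`, the flux is `q₁(σ,β) = G(β+σ) + G(β−σ)`, so its partial
derivatives follow from `G' = g`, and `q₁` is C² on `U` because `β ± σ` stay away from `0`, where
`g = f'(x)/x` is C¹. The entropy relations are then an identity of rational functions in `β ± σ`. -/

open MeasureTheory Set

noncomputable section

/-- Phase-space region `U = {(σ,β) : σ > |β|}`. -/
def U : Set (ℝ × ℝ) := {p | |p.2| < p.1}

/-- `(η,q)` is an entropy pair for the γ = 3 isentropic Carrollian system: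
both are C² on `U` and the gradient relations
`∂_σ q = (β ∂_σ η − σ ∂_β η)/(β² − σ²)`, `∂_β q = (β ∂_β η − σ ∂_σ η)/(β² − σ²)` hold on `U`. -/
structure IsEntropyPair (η q : ℝ → ℝ → ℝ) : Prop where
  smooth_eta : ContDiffOn ℝ 2 (fun p : ℝ × ℝ => η p.1 p.2) U
  smooth_q : ContDiffOn ℝ 2 (fun p : ℝ × ℝ => q p.1 p.2) U
  grad_sigma : ∀ s b : ℝ, (s, b) ∈ U →
    deriv (fun s' => q s' b) s
      = (b * deriv (fun s' => η s' b) s - s * deriv (fun b' => η s b') b) / (b^2 - s^2)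
  grad_beta : ∀ s b : ℝ, (s, b) ∈ U →
    deriv (fun b' => q s b') b
      = (b * deriv (fun b' => η s b') b - s * deriv (fun s' => η s' b) s) / (b^2 - s^2)

/-- The first entropy `η₁(σ,β) = f(β−σ) + f(β+σ)`. -/
def eta1 (f : ℝ → ℝ) (s b : ℝ) : ℝ := f (b - s) + f (b + s)

/-- The first entropy flux
`q₁(σ,β) = ∫_β^{β+σ} f'(u)/u du − ∫_{β−σ}^β f'(u)/u du + 2∫_0^β f'(u)/u du`. -/
def q1flux (f : ℝ → ℝ) (s b : ℝ) : ℝ :=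
  (∫ u in b..(b + s), deriv f u / u) - (∫ u in (b - s)..b, deriv f u / u)
    + 2 * ∫ u in (0:ℝ)..b, deriv f u / u

open intervalIntegral

lemma mem_U_iff {s b : ℝ} : (s, b) ∈ U ↔ 0 < b + s ∧ b - s < 0 := by
  simp only [U, mem_ofPred_eq, abs_lt]
  constructor <;> rintro ⟨h₁, h₂⟩ <;> constructor <;> linarith

section IntegralDivId

variable {φ : ℝ → ℝ}

/-- `x ↦ ∫₀ˣ φ(u)/u du`, with the integrand `dslope φ 0` extended continuously through `0`. -/
def integralDivId (φ : ℝ → ℝ) (x : ℝ) : ℝ := ∫ u in (0:ℝ)..x, dslope φ 0 u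

lemma dslope_zero_eq_div (h0 : φ 0 = 0) {x : ℝ} (hx : x ≠ 0) : dslope φ 0 x = φ x / x := by
  rw [dslope_of_ne _ hx, slope_def_field, h0, sub_zero, sub_zero]

lemma continuous_dslope_zero (hφ : ContDiff ℝ 1 φ) : Continuous (dslope φ 0) := by
  refine continuous_iff_continuousAt.2 fun x => ?_
  rcases eq_or_ne x 0 with rfl | hx
  · exact continuousAt_dslope_same.2 (hφ.differentiable one_ne_zero 0)
  · exact (continuousAt_dslope_of_ne hx).2 hφ.continuous.continuousAt

lemma integral_div_id_eq_integral_dslope (h0 : φ 0 = 0) (a c : ℝ) :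
    ∫ u in a..c, φ u / u = ∫ u in a..c, dslope φ 0 u := by
  refine integral_congr_ae ?_
  filter_upwards [measure_eq_zero_iff_ae_notMem.1 (measure_singleton (0 : ℝ))] with u hu _
  exact (dslope_zero_eq_div h0 hu).symm

lemma hasDerivAt_integralDivId (hφ : ContDiff ℝ 1 φ) (x : ℝ) :
    HasDerivAt (integralDivId φ) (dslope φ 0 x) x :=
  have hg := continuous_dslope_zero hφ
  integral_hasDerivAt_right (hg.intervalIntegrable _ _) (hg.stronglyMeasurableAtFilter _ _)
    hg.continuousAt

lemma contDiffOn_integralDivId (hφ : ContDiff ℝ 1 φ) (h0 : φ 0 = 0) :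
    ContDiffOn ℝ 2 (integralDivId φ) {x | x ≠ 0} := by
  rw [show (2 : WithTop ℕ∞) = 1 + 1 from rfl, contDiffOn_succ_iff_deriv_of_isOpen isOpen_ne]
  refine ⟨fun x _ => (hasDerivAt_integralDivId hφ x).differentiableAt.differentiableWithinAt,
    by simp, ?_⟩
  refine (hφ.contDiffOn.div contDiffOn_id fun x hx => hx).congr fun x hx => ?_
  rw [(hasDerivAt_integralDivId hφ x).deriv]
  exact dslope_zero_eq_div h0 hx

end IntegralDivId

variable {f : ℝ → ℝ}

lemma q1flux_eq (hf' : ContDiff ℝ 1 (deriv f)) (hf0 : deriv f 0 = 0) (s b : ℝ) :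
    q1flux f s b = integralDivId (deriv f) (b + s) + integralDivId (deriv f) (b - s) := by
  have hint : ∀ a c : ℝ, IntervalIntegrable (dslope (deriv f) 0) volume a c :=
    (continuous_dslope_zero hf').intervalIntegrable
  have h₁ := integral_add_adjacent_intervals (hint 0 b) (hint b (b + s))
  have h₂ := integral_add_adjacent_intervals (hint 0 (b - s)) (hint (b - s) b)
  simp only [q1flux, integral_div_id_eq_integral_dslope hf0, integralDivId]
  linarith

lemma contDiffOn_eta1 (hf : ContDiff ℝ 2 f) :
    ContDiffOn ℝ 2 (fun p : ℝ × ℝ => eta1 f p.1 p.2) U :=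
  ((hf.comp (contDiff_snd.sub contDiff_fst)).add
    (hf.comp (contDiff_snd.add contDiff_fst))).contDiffOn

lemma contDiffOn_q1flux (hf' : ContDiff ℝ 1 (deriv f)) (hf0 : deriv f 0 = 0) :
    ContDiffOn ℝ 2 (fun p : ℝ × ℝ => q1flux f p.1 p.2) U := by
  have hG := contDiffOn_integralDivId hf' hf0
  simp only [q1flux_eq hf' hf0]
  exact (hG.comp (contDiff_snd.add contDiff_fst).contDiffOn fun p hp => (mem_U_iff.1 hp).1.ne').add
    (hG.comp (contDiff_snd.sub contDiff_fst).contDiffOn fun p hp => (mem_U_iff.1 hp).2.ne)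

lemma deriv_eta1_sigma (hd : Differentiable ℝ f) (s b : ℝ) :
    deriv (fun s' => eta1 f s' b) s = deriv f (b + s) - deriv f (b - s) := by
  have h : HasDerivAt (fun s' => eta1 f s' b) (deriv f (b - s) * -1 + deriv f (b + s) * 1) s :=
    ((hd (b - s)).hasDerivAt.comp s ((hasDerivAt_id s).const_sub b)).add
      ((hd (b + s)).hasDerivAt.comp s ((hasDerivAt_id s).const_add b))
  rw [h.deriv]
  ring

lemma deriv_eta1_beta (hd : Differentiable ℝ f) (s b : ℝ) :
    deriv (fun b' => eta1 f s b') b = deriv f (b + s) + deriv f (b - s) := by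
  have h : HasDerivAt (fun b' => eta1 f s b') (deriv f (b - s) * 1 + deriv f (b + s) * 1) b :=
    ((hd (b - s)).hasDerivAt.comp b ((hasDerivAt_id b).sub_const s)).add
      ((hd (b + s)).hasDerivAt.comp b ((hasDerivAt_id b).add_const s))
  rw [h.deriv]
  ring

lemma deriv_q1flux_sigma (hf' : ContDiff ℝ 1 (deriv f)) (hf0 : deriv f 0 = 0) {s b : ℝ}
    (hp : b + s ≠ 0) (hm : b - s ≠ 0) :
    deriv (fun s' => q1flux f s' b) s
      = deriv f (b + s) / (b + s) - deriv f (b - s) / (b - s) := by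
  have hG := hasDerivAt_integralDivId hf'
  have h : HasDerivAt (fun s' => q1flux f s' b)
      (dslope (deriv f) 0 (b + s) * 1 + dslope (deriv f) 0 (b - s) * -1) s := by
    simp only [q1flux_eq hf' hf0]
    exact ((hG (b + s)).comp s ((hasDerivAt_id s).const_add b)).add
      ((hG (b - s)).comp s ((hasDerivAt_id s).const_sub b))
  rw [h.deriv, dslope_zero_eq_div hf0 hp, dslope_zero_eq_div hf0 hm]
  ring

lemma deriv_q1flux_beta (hf' : ContDiff ℝ 1 (deriv f)) (hf0 : deriv f 0 = 0) {s b : ℝ}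
    (hp : b + s ≠ 0) (hm : b - s ≠ 0) :
    deriv (fun b' => q1flux f s b') b
      = deriv f (b + s) / (b + s) + deriv f (b - s) / (b - s) := by
  have hG := hasDerivAt_integralDivId hf'
  have h : HasDerivAt (fun b' => q1flux f s b')
      (dslope (deriv f) 0 (b + s) * 1 + dslope (deriv f) 0 (b - s) * 1) b := by
    simp only [q1flux_eq hf' hf0]
    exact ((hG (b + s)).comp b ((hasDerivAt_id b).add_const s)).add
      ((hG (b - s)).comp b ((hasDerivAt_id b).sub_const s))
  rw [h.deriv, dslope_zero_eq_div hf0 hp, dslope_zero_eq_div hf0 hm]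
  ring

/-- **First family of entropy pairs** (Lemma 5.2, first part): for `f ∈ C²(ℝ)` with
`f'(0) = 0`, the pair `(η₁,q₁)` is C² on `U`, the partial derivatives of `q₁` are
`∂_σ q₁ = f'(β+σ)/(β+σ) − f'(β−σ)/(β−σ)` and `∂_β q₁ = f'(β+σ)/(β+σ) + f'(β−σ)/(β−σ)`,
and `(η₁,q₁)` is an entropy pair. -/
theorem first_entropy_family (f : ℝ → ℝ) (hf : ContDiff ℝ 2 f) (hf0 : deriv f 0 = 0) :
    ContDiffOn ℝ 2 (fun p : ℝ × ℝ => eta1 f p.1 p.2) U ∧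
    ContDiffOn ℝ 2 (fun p : ℝ × ℝ => q1flux f p.1 p.2) U ∧
    (∀ s b : ℝ, (s, b) ∈ U →
      deriv (fun s' => q1flux f s' b) s
        = deriv f (b + s) / (b + s) - deriv f (b - s) / (b - s) ∧
      deriv (fun b' => q1flux f s b') b
        = deriv f (b + s) / (b + s) + deriv f (b - s) / (b - s)) ∧
    IsEntropyPair (eta1 f) (q1flux f) := by
  have hf' : ContDiff ℝ 1 (deriv f) := hf.deriv' (n := 1)
  have hd : Differentiable ℝ f := hf.differentiable two_ne_zero
  have hq : ∀ s b : ℝ, (s, b) ∈ U →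
      deriv (fun s' => q1flux f s' b) s
        = deriv f (b + s) / (b + s) - deriv f (b - s) / (b - s) ∧
      deriv (fun b' => q1flux f s b') b
        = deriv f (b + s) / (b + s) + deriv f (b - s) / (b - s) := fun s b hU =>
    have ⟨hp, hm⟩ := mem_U_iff.1 hU
    ⟨deriv_q1flux_sigma hf' hf0 hp.ne' hm.ne, deriv_q1flux_beta hf' hf0 hp.ne' hm.ne⟩
  refine ⟨contDiffOn_eta1 hf, contDiffOn_q1flux hf' hf0, hq,
    contDiffOn_eta1 hf, contDiffOn_q1flux hf' hf0, fun s b hU => ?_, fun s b hU => ?_⟩ <;>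
  · obtain ⟨hp, hm⟩ := mem_U_iff.1 hU
    simp only [(hq s b hU).1, (hq s b hU).2, deriv_eta1_sigma hd, deriv_eta1_beta hd,
      show b ^ 2 - s ^ 2 = (b + s) * (b - s) by ring]
    field_simp [hp.ne', hm.ne]
    ring
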